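/- Let p be a positive natural number, E := EuclideanSpace ℝ (Fin p), and let (Ω, 𝒜, μ) be a probability space with a filtration (ℱ_k)_{k∈ℕ}. Let L, σ > 0 and ζ ≥ 0, and let f : E → ℝ be differentiable with L-Lipschitz gradient and bounded below by f* ∈ ℝ. Fix a constant stepsize 0 < α ≤ 1/L. Suppose random sequences θ_k, r_k, b_k : Ω → E satisfy: θ_0 deterministic; θ_{k+1} = θ_k − α • (∇f(θ_k) + b_k + r_k); θ_k and b_k are ℱ_k-measurable; r_k is ℱ_{k+1}-measurable, integrable with square-integrable norm; E[r_k | ℱ_k] = 0 a.s.; E[‖r_k‖² | ℱ_k] ≤ σ² a.s.; ‖b_k‖² ≤ ζ² a.s.; and each θ_k has square-integrable norm with f(θ_k) integrable. Then for every K ≥ 1: (1/K)·Σ_{k=0}^{K−1} E[‖∇f(θ_k)‖²] ≤ 2·(f(θ_0) − f*)/(K·α) + α·L·σ² + ζ². -/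

import Mathlib

/-
Through the descent lemma of the `L`-smooth `f`, the polarization
`2⟪g, g + b⟫ = ‖g‖² + ‖g + b‖² - ‖b‖²` and `αL ≤ 1`, one step of the iteration gives
`f θₖ₊₁ ≤ f θₖ - α/2 ‖∇f θₖ‖² + α/2 ‖bₖ‖² + ⟪wₖ, rₖ⟫ + Lα²/2 ‖rₖ‖²` with `wₖ` measurable
for `ℱₖ`. In expectation the cross term vanishes by the pull-out property and `E[rₖ | ℱₖ] = 0`,
and `E‖rₖ‖² ≤ σ²`; summing the resulting descent inequalities over `k < K` telescopes, and
`f ≥ f*` bounds the last term.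
-/

open MeasureTheory
open scoped InnerProductSpace

section Smooth

variable {E : Type*} [NormedAddCommGroup E] [InnerProductSpace ℝ E] [CompleteSpace E]
  {f : E → ℝ} {L : ℝ}

theorem Differentiable.hasDerivAt_comp_add_smul (hf : Differentiable ℝ f) (x v : E) (t : ℝ) :
    HasDerivAt (fun s : ℝ => f (x + s • v)) ⟪gradient f (x + t • v), v⟫_ℝ t := by
  have hline : HasDerivAt (fun s : ℝ => x + s • v) v t := by
    simpa using ((hasDerivAt_id t).smul_const v).const_add x
  exact ((hf _).hasGradientAt.hasFDerivAt.comp_hasDerivAt t hline).congr_deriv (by simp)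

theorem le_add_inner_gradient_add_sq (hf : Differentiable ℝ f)
    (hLip : ∀ x y, ‖gradient f x - gradient f y‖ ≤ L * ‖x - y‖) (x y : E) :
    f y ≤ f x + ⟪gradient f x, y - x⟫_ℝ + L / 2 * ‖y - x‖ ^ 2 := by
  set v := y - x
  have hderiv := hf.hasDerivAt_comp_add_smul x v
  have hmodel : ∀ t : ℝ,
      HasDerivAt (fun s : ℝ => f x + s * ⟪gradient f x, v⟫_ℝ + L / 2 * ‖v‖ ^ 2 * s ^ 2)
        (⟪gradient f x, v⟫_ℝ + L / 2 * ‖v‖ ^ 2 * (2 * t)) t := fun t => by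
    refine ((((hasDerivAt_id t).mul_const _).const_add (f x)).add
      ((hasDerivAt_pow 2 t).const_mul _)).congr_deriv ?_
    simp
  have hslope : ∀ t ∈ Set.Ico (0 : ℝ) 1,
      ⟪gradient f (x + t • v), v⟫_ℝ ≤ ⟪gradient f x, v⟫_ℝ + L / 2 * ‖v‖ ^ 2 * (2 * t) := by
    rintro t ⟨ht, -⟩
    calc ⟪gradient f (x + t • v), v⟫_ℝ
        = ⟪gradient f x, v⟫_ℝ + ⟪gradient f (x + t • v) - gradient f x, v⟫_ℝ := by
          rw [inner_sub_left]; ring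
      _ ≤ ⟪gradient f x, v⟫_ℝ + L * ‖x + t • v - x‖ * ‖v‖ := by
          grw [real_inner_le_norm (gradient f (x + t • v) - gradient f x), hLip]
      _ = ⟪gradient f x, v⟫_ℝ + L / 2 * ‖v‖ ^ 2 * (2 * t) := by
          rw [add_sub_cancel_left, norm_smul, Real.norm_of_nonneg ht]; ring
  have := image_le_of_deriv_right_le_deriv_boundary
    (fun t _ => (hderiv t).continuousAt.continuousWithinAt)
    (fun t _ => (hderiv t).hasDerivWithinAt) (by simp)
    (fun t _ => (hmodel t).continuousAt.continuousWithinAt)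
    (fun t _ => (hmodel t).hasDerivWithinAt) hslope (Set.right_mem_Icc.2 zero_le_one)
  simpa [v] using this

theorem biased_gradient_step_le (hf : Differentiable ℝ f)
    (hLip : ∀ x y, ‖gradient f x - gradient f y‖ ≤ L * ‖x - y‖) {α : ℝ} (hα : 0 ≤ α)
    (hαL : α * L ≤ 1) (x b r : E) :
    f (x - α • (gradient f x + b + r)) ≤ f x - α / 2 * ‖gradient f x‖ ^ 2 + α / 2 * ‖b‖ ^ 2
      + ⟪(L * α ^ 2) • (gradient f x + b) - α • gradient f x, r⟫_ℝ
      + L * α ^ 2 / 2 * ‖r‖ ^ 2 := by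
  have hdescent := le_add_inner_gradient_add_sq hf hLip x (x - α • (gradient f x + b + r))
  rw [sub_sub_cancel_left, norm_neg, norm_smul, Real.norm_of_nonneg hα, inner_neg_right,
    real_inner_smul_right] at hdescent
  have hpolar := norm_add_sq_real (gradient f x) b
  have hsq := norm_add_sq_real (gradient f x + b) r
  simp only [inner_add_left, inner_add_right, inner_sub_left, real_inner_smul_left,
    real_inner_self_eq_norm_sq] at hdescent hpolar hsq ⊢
  -- `αL ≤ 1` is exactly what makes the `‖∇f x + b‖²` term of the expansion nonpositive
  have hcoef : 0 ≤ α * (1 - α * L) * ‖gradient f x + b‖ ^ 2 := by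
    have := sub_nonneg.2 hαL; positivity
  rw [mul_pow, hsq, hpolar] at hdescent
  rw [hpolar] at hcoef
  linarith

end Smooth

section Expectation

variable {Ω : Type*} {m mΩ : MeasurableSpace Ω} {μ : Measure Ω}

theorem MeasureTheory.MemLp.integrable_inner {E : Type*} [NormedAddCommGroup E]
    [InnerProductSpace ℝ E] {v r : Ω → E} (hv : MemLp v 2 μ) (hr : MemLp r 2 μ) :
    Integrable (fun ω => ⟪v ω, r ω⟫_ℝ) μ :=
  memLp_one_iff_integrable.1 ((innerSL ℝ).memLp_of_bilin 1 hv hr)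

theorem integral_inner_eq_zero_of_condExp_eq_zero {E : Type*} [NormedAddCommGroup E]
    [InnerProductSpace ℝ E] [CompleteSpace E] [IsFiniteMeasure μ] (hm : m ≤ mΩ) {v r : Ω → E}
    (hv : StronglyMeasurable[m] v) (hv2 : MemLp v 2 μ) (hr2 : MemLp r 2 μ)
    (hr0 : μ[r|m] =ᵐ[μ] 0) :
    ∫ ω, ⟪v ω, r ω⟫_ℝ ∂μ = 0 := by
  have hpull : μ[fun ω => ⟪v ω, r ω⟫_ℝ|m] =ᵐ[μ] 0 := by
    filter_upwards [condExp_bilin_of_stronglyMeasurable_left (innerSL ℝ) hv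
      (hv2.integrable_inner hr2) (hr2.integrable one_le_two), hr0] with ω hω hω0
    exact hω.trans (by simp [hω0])
  rw [← integral_condExp hm, integral_congr_ae hpull, Pi.zero_def, integral_zero]

theorem integral_le_of_ae_condExp_le [IsProbabilityMeasure μ] (hm : m ≤ mΩ) {g : Ω → ℝ}
    {c : ℝ} (hg : ∀ᵐ ω ∂μ, μ[g|m] ω ≤ c) : ∫ ω, g ω ∂μ ≤ c := by
  rw [← integral_condExp hm]
  simpa using integral_mono_ae integrable_condExp (integrable_const c) hg

theorem LipschitzWith.memLp_comp {E F : Type*} [NormedAddCommGroup E] [NormedAddCommGroup F]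
    [IsFiniteMeasure μ] {K : NNReal} {g : E → F} (hg : LipschitzWith K g) {p : ENNReal}
    {θ : Ω → E} (hθ : MemLp θ p μ) : MemLp (fun ω => g (θ ω)) p μ := by
  have hshift : LipschitzWith K (fun x => g x - g 0) :=
    .of_dist_le_mul fun x y => by simpa only [dist_sub_right] using hg.dist_le_mul x y
  convert (hshift.comp_memLp (sub_self _) hθ).add (memLp_const (g 0)) using 1
  ext ω
  simp

theorem integral_biased_step_le {E : Type*} [NormedAddCommGroup E] [InnerProductSpace ℝ E]
    [CompleteSpace E] [IsProbabilityMeasure μ] (hm : m ≤ mΩ) {f : E → ℝ} {L α σ ζ : ℝ}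
    (hf : Differentiable ℝ f) (hLip : ∀ x y, ‖gradient f x - gradient f y‖ ≤ L * ‖x - y‖)
    (hL : 0 ≤ L) (hα : 0 ≤ α) (hαL : α * L ≤ 1) {θ θ' b r : Ω → E}
    (hθ' : ∀ ω, θ' ω = θ ω - α • (gradient f (θ ω) + b ω + r ω))
    (hθ : StronglyMeasurable[m] θ) (hθ2 : MemLp θ 2 μ) (hb : StronglyMeasurable[m] b)
    (hbζ : ∀ᵐ ω ∂μ, ‖b ω‖ ^ 2 ≤ ζ ^ 2) (hr2 : MemLp r 2 μ) (hr0 : μ[r|m] =ᵐ[μ] 0)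
    (hrσ : ∫ ω, ‖r ω‖ ^ 2 ∂μ ≤ σ ^ 2) (hfθ : Integrable (fun ω => f (θ ω)) μ)
    (hfθ' : Integrable (fun ω => f (θ' ω)) μ) :
    ∫ ω, f (θ' ω) ∂μ ≤ ∫ ω, f (θ ω) ∂μ - α / 2 * ∫ ω, ‖gradient f (θ ω)‖ ^ 2 ∂μ
      + (α / 2 * ζ ^ 2 + L * α ^ 2 / 2 * σ ^ 2) := by
  have hgradLip : LipschitzWith L.toNNReal (gradient f) :=
    .of_dist_le' fun x y => by simpa only [dist_eq_norm] using hLip x y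
  have hg : StronglyMeasurable[m] fun ω => gradient f (θ ω) :=
    hgradLip.continuous.comp_stronglyMeasurable hθ
  have hg2 : MemLp (fun ω => gradient f (θ ω)) 2 μ := hgradLip.memLp_comp hθ2
  have hb2 : MemLp b 2 μ := by
    refine .of_bound (hb.mono hm).aestronglyMeasurable |ζ| ?_
    filter_upwards [hbζ] with ω hω
    simpa using sq_le_sq.1 hω
  set w : Ω → E := fun ω => (L * α ^ 2) • (gradient f (θ ω) + b ω) - α • gradient f (θ ω)
  have hw : StronglyMeasurable[m] w := ((hg.add hb).const_smul _).sub (hg.const_smul _)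
  have hw2 : MemLp w 2 μ := ((hg2.add hb2).const_smul _).sub (hg2.const_smul _)
  have hcross : ∫ ω, ⟪w ω, r ω⟫_ℝ ∂μ = 0 :=
    integral_inner_eq_zero_of_condExp_eq_zero hm hw hw2 hr2 hr0
  have hpointwise : ∀ᵐ ω ∂μ, f (θ' ω) ≤ f (θ ω) - α / 2 * ‖gradient f (θ ω)‖ ^ 2
      + α / 2 * ζ ^ 2 + ⟪w ω, r ω⟫_ℝ + L * α ^ 2 / 2 * ‖r ω‖ ^ 2 := by
    filter_upwards [hbζ] with ω hω
    rw [hθ']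
    have hbias := mul_le_mul_of_nonneg_left hω (by positivity : 0 ≤ α / 2)
    linarith [biased_gradient_step_le hf hLip hα hαL (θ ω) (b ω) (r ω)]
  have hgsq := (hg2.integrable_norm_pow two_ne_zero).const_mul (α / 2)
  have hrsq := (hr2.integrable_norm_pow two_ne_zero).const_mul (L * α ^ 2 / 2)
  have hwr := hw2.integrable_inner hr2
  have I₁ := hfθ.sub' hgsq
  have I₂ := I₁.fun_add (integrable_const (α / 2 * ζ ^ 2))
  have I₃ := I₂.fun_add hwr
  have hmono := integral_mono_ae hfθ' (I₃.fun_add hrsq) hpointwise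
  rw [integral_add I₃ hrsq, integral_add I₂ hwr, integral_add I₁ (integrable_const _),
    integral_sub hfθ hgsq, integral_const_mul, integral_const_mul (L * α ^ 2 / 2), integral_const,
    hcross, probReal_univ, one_smul] at hmono
  have hnoise : L * α ^ 2 / 2 * ∫ ω, ‖r ω‖ ^ 2 ∂μ ≤ L * α ^ 2 / 2 * σ ^ 2 := by gcongr
  linarith

end Expectation

theorem mean_le_of_le_sub_mul_add {a s : ℕ → ℝ} {c C lb : ℝ} (hc : 0 < c)
    (hstep : ∀ k, a (k + 1) ≤ a k - c * s k + C) (hlb : ∀ k, lb ≤ a k) {K : ℕ} (hK : 0 < K) :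
    1 / (K : ℝ) * ∑ k ∈ Finset.range K, s k ≤ (a 0 - lb) / (K * c) + C / c := by
  have htelescope : c * ∑ k ∈ Finset.range K, s k ≤ a 0 - a K + K * C := by
    have := Finset.sum_le_sum fun k (_ : k ∈ Finset.range K) =>
      (by linarith [hstep k] : c * s k ≤ a k - a (k + 1) + C)
    rwa [Finset.sum_add_distrib, Finset.sum_range_sub', Finset.sum_const, Finset.card_range,
      nsmul_eq_mul, ← Finset.mul_sum] at this
  have hK' : (0 : ℝ) < K := Nat.cast_pos.2 hK
  rw [div_add_div _ _ (by positivity) hc.ne', le_div_iff₀ (by positivity)]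
  field_simp
  linarith [hlb K]

theorem parameter_shift_biased_sgd_bound_general
    (p : ℕ)
    {Ω : Type*} {mΩ : MeasurableSpace Ω} {μ : Measure Ω} [IsProbabilityMeasure μ]
    (ℱ : Filtration ℕ mΩ)
    (L σ ζ : ℝ) (hL : 0 < L)
    (f : EuclideanSpace ℝ (Fin p) → ℝ) (fstar : ℝ)
    (hf : Differentiable ℝ f)
    (hLip : ∀ x y, ‖gradient f x - gradient f y‖ ≤ L * ‖x - y‖)
    (hflb : ∀ x, fstar ≤ f x)
    (α : ℝ) (hα : 0 < α) (hαL : α ≤ 1 / L)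
    (θ r bk : ℕ → Ω → EuclideanSpace ℝ (Fin p))
    (θ0 : EuclideanSpace ℝ (Fin p)) (hθ0 : ∀ ω, θ 0 ω = θ0)
    (hrec : ∀ k ω, θ (k + 1) ω = θ k ω
      - α • (gradient f (θ k ω) + bk k ω + r k ω))
    (hθmeas : ∀ k, StronglyMeasurable[ℱ k] (θ k))
    (hbmeas : ∀ k, StronglyMeasurable[ℱ k] (bk k))
    (hrint : ∀ k, Integrable (r k) μ)
    (hrsq : ∀ k, Integrable (fun ω => ‖r k ω‖ ^ 2) μ)
    (hrcond : ∀ k, μ[r k|ℱ k] =ᵐ[μ] 0)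
    (hrvar : ∀ k, ∀ᵐ ω ∂μ, (μ[fun ω' => ‖r k ω'‖ ^ 2|ℱ k]) ω ≤ σ ^ 2)
    (hbbd : ∀ k, ∀ᵐ ω ∂μ, ‖bk k ω‖ ^ 2 ≤ ζ ^ 2)
    (hθsq : ∀ k, Integrable (fun ω => ‖θ k ω‖ ^ 2) μ)
    (hfint : ∀ k, Integrable (fun ω => f (θ k ω)) μ)
    (K : ℕ) (hK : 1 ≤ K) :
    (1 / (K : ℝ)) * ∑ k ∈ Finset.range K, ∫ ω, ‖gradient f (θ k ω)‖ ^ 2 ∂μ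
      ≤ 2 * (f θ0 - fstar) / ((K : ℝ) * α) + α * L * σ ^ 2 + ζ ^ 2 := by
  have hαL' : α * L ≤ 1 := (le_div_iff₀ hL).1 hαL
  have hθ2 k : MemLp (θ k) 2 μ := (memLp_two_iff_integrable_sq_norm
    ((hθmeas k).mono (ℱ.le k)).aestronglyMeasurable).2 (hθsq k)
  have hr2 k : MemLp (r k) 2 μ :=
    (memLp_two_iff_integrable_sq_norm (hrint k).aestronglyMeasurable).2 (hrsq k)
  have hstep k := integral_biased_step_le (ℱ.le k) hf hLip hL.le hα.le hαL' (hrec k)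
    (hθmeas k) (hθ2 k) (hbmeas k) (hbbd k) (hr2 k) (hrcond k)
    (integral_le_of_ae_condExp_le (ℱ.le k) (hrvar k)) (hfint k) (hfint (k + 1))
  have hlb k : fstar ≤ ∫ ω, f (θ k ω) ∂μ := by
    simpa using integral_mono (integrable_const fstar) (hfint k) fun ω => hflb (θ k ω)
  calc (1 / (K : ℝ)) * ∑ k ∈ Finset.range K, ∫ ω, ‖gradient f (θ k ω)‖ ^ 2 ∂μ
      ≤ (∫ ω, f (θ 0 ω) ∂μ - fstar) / (K * (α / 2))
        + (α / 2 * ζ ^ 2 + L * α ^ 2 / 2 * σ ^ 2) / (α / 2) :=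
        mean_le_of_le_sub_mul_add (by positivity) hstep hlb hK
    _ = 2 * (f θ0 - fstar) / ((K : ℝ) * α) + α * L * σ ^ 2 + ζ ^ 2 := by
        simp only [hθ0, integral_const, probReal_univ, one_smul]
        field_simp
        ring

/-- biased-SGD convergence bound applied to the parameter-shift rule under
biased circuit evaluations. With constant stepsize `0 < α ≤ 1/L`, conditionally
mean-zero noise `r_k` of conditional variance at most `σ²` and systematic bias `b_k`
with `‖b_k‖² ≤ ζ²` a.s.,
`(1/K)·Σ_{k<K} E‖∇f(θ_k)‖² ≤ 2(f(θ_0) − f*)/(Kα) + αLσ² + ζ²`. -/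
theorem parameter_shift_biased_sgd_bound
    (p : ℕ) (hp : 0 < p)
    {Ω : Type*} {mΩ : MeasurableSpace Ω} {μ : Measure Ω} [IsProbabilityMeasure μ]
    (ℱ : Filtration ℕ mΩ)
    (L σ ζ : ℝ) (hL : 0 < L) (hσ : 0 < σ) (hζ : 0 ≤ ζ)
    (f : EuclideanSpace ℝ (Fin p) → ℝ) (fstar : ℝ)
    (hf : Differentiable ℝ f)
    (hLip : ∀ x y, ‖gradient f x - gradient f y‖ ≤ L * ‖x - y‖)
    (hflb : ∀ x, fstar ≤ f x)
    (α : ℝ) (hα : 0 < α) (hαL : α ≤ 1 / L)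
    (θ r bk : ℕ → Ω → EuclideanSpace ℝ (Fin p))
    (θ0 : EuclideanSpace ℝ (Fin p)) (hθ0 : ∀ ω, θ 0 ω = θ0)
    (hrec : ∀ k ω, θ (k + 1) ω = θ k ω
      - α • (gradient f (θ k ω) + bk k ω + r k ω))
    (hθmeas : ∀ k, StronglyMeasurable[ℱ k] (θ k))
    (hbmeas : ∀ k, StronglyMeasurable[ℱ k] (bk k))
    (hrmeas : ∀ k, StronglyMeasurable[ℱ (k + 1)] (r k))
    (hrint : ∀ k, Integrable (r k) μ)
    (hrsq : ∀ k, Integrable (fun ω => ‖r k ω‖ ^ 2) μ)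
    (hrcond : ∀ k, μ[r k|ℱ k] =ᵐ[μ] 0)
    (hrvar : ∀ k, ∀ᵐ ω ∂μ, (μ[fun ω' => ‖r k ω'‖ ^ 2|ℱ k]) ω ≤ σ ^ 2)
    (hbbd : ∀ k, ∀ᵐ ω ∂μ, ‖bk k ω‖ ^ 2 ≤ ζ ^ 2)
    (hθsq : ∀ k, Integrable (fun ω => ‖θ k ω‖ ^ 2) μ)
    (hfint : ∀ k, Integrable (fun ω => f (θ k ω)) μ)
    (K : ℕ) (hK : 1 ≤ K) :
    (1 / (K : ℝ)) * ∑ k ∈ Finset.range K, ∫ ω, ‖gradient f (θ k ω)‖ ^ 2 ∂μ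
      ≤ 2 * (f θ0 - fstar) / ((K : ℝ) * α) + α * L * σ ^ 2 + ζ ^ 2 :=
  parameter_shift_biased_sgd_bound_general p ℱ L σ ζ hL f fstar hf hLip hflb α hα hαL θ r bk θ0 hθ0
    hrec hθmeas hbmeas hrint hrsq hrcond hrvar hbbd hθsq hfint K hK
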